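/- arXiv:1307.7454 — 3 statements merged into one kernel-verified Lean document; each statement's English description precedes it below -/
import Mathlib

section
/- Let ε ∈ (0,1], let k ≥ 1 be an integer, and let Q be the output of the Frequent Directions algorithm run on an n×d matrix A with parameter ℓ = ⌈k + k/ε⌉. Then: (i) for every unit vector x ∈ ℝ^d, 0 ≤ ‖Ax‖² − ‖Qx‖² ≤ ‖A‖_F²/ℓ; (ii) ‖A − π_{Q_k}(A)‖_F² ≤ (1+ε)‖A − A_k‖_F²; and (iii) ‖A‖_F² − ‖A_k‖_F² ≤ ‖A‖_F² − ‖Q_k‖_F² ≤ (1+ε)(‖A‖_F² − ‖A_k‖_F²). -/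
/-!
Each step of Frequent Directions adds `(aᵢ ⬝ x)²` to `‖Q x‖²` and removes
`δᵢ ‖Yᵢᵀ x‖² ∈ [0, δᵢ ‖x‖²]`, so telescoping gives `0 ≤ ‖A x‖² - ‖Q x‖² ≤ Δ ‖x‖²`
with `Δ = ∑ δᵢ`; summed over a basis, each step removes exactly `ℓ δᵢ`, so
`‖A‖_F² = ‖Q‖_F² + ℓ Δ`. By Ky Fan's maximum principle the top `k` directions then satisfy
`‖A_k‖_F² - k Δ ≤ ‖Q_k‖_F² ≤ ‖Q‖_F²`, hence `(ℓ - k) Δ ≤ ‖A - A_k‖_F²`, and `ℓ ≥ k + k / ε`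
turns this into `k Δ ≤ ε ‖A - A_k‖_F²`, which is all the error bounds need.
-/

open Matrix

/-- The squared Euclidean norm of a vector in `ℝ^m`. -/
noncomputable def sqNorm {m : ℕ} (v : Fin m → ℝ) : ℝ := ∑ i, v i ^ 2

/-- The squared Frobenius norm of a real matrix. -/
noncomputable def frobSq {m p : ℕ} (M : Matrix (Fin m) (Fin p) ℝ) : ℝ :=
  ∑ i, ∑ j, M i j ^ 2

open Finset

section Norms

variable {m p d : ℕ}

lemma sqNorm_eq_dotProduct_self (u : Fin m → ℝ) : sqNorm u = u ⬝ᵥ u := by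
  simp only [sqNorm, dotProduct, sq]

lemma sqNorm_nonneg (u : Fin m → ℝ) : 0 ≤ sqNorm u :=
  sum_nonneg fun _ _ => sq_nonneg _

lemma sqNorm_mulVec (M : Matrix (Fin m) (Fin d) ℝ) (x : Fin d → ℝ) :
    sqNorm (M *ᵥ x) = x ⬝ᵥ (Mᵀ * M) *ᵥ x := by
  rw [sqNorm_eq_dotProduct_self, ← mulVec_mulVec, dotProduct_mulVec x, vecMul_transpose]

lemma sqNorm_mulVec_of_transpose_mul_self_eq_one {U : Matrix (Fin m) (Fin d) ℝ}
    (hU : Uᵀ * U = 1) (x : Fin d → ℝ) : sqNorm (U *ᵥ x) = sqNorm x := by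
  rw [sqNorm_mulVec, hU, one_mulVec, sqNorm_eq_dotProduct_self]

lemma sqNorm_diagonal_mulVec (s u : Fin m → ℝ) :
    sqNorm (diagonal s *ᵥ u) = ∑ j, s j ^ 2 * u j ^ 2 := by
  simp only [sqNorm, mulVec_diagonal, mul_pow]

lemma sqNorm_transpose_mulVec_le {Y : Matrix (Fin d) (Fin p) ℝ} (hY : Yᵀ * Y = 1)
    (x : Fin d → ℝ) : sqNorm (Yᵀ *ᵥ x) ≤ sqNorm x := by
  set R : Matrix (Fin d) (Fin d) ℝ := 1 - Y * Yᵀ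
  have hRR : Rᵀ * R = R := by
    simp only [R, transpose_sub, transpose_one, transpose_mul, transpose_transpose, sub_mul,
      mul_sub, Matrix.one_mul, Matrix.mul_one, Matrix.mul_assoc, ← Matrix.mul_assoc Yᵀ Y, hY]
    abel
  have hsplit : sqNorm (R *ᵥ x) = sqNorm x - sqNorm (Yᵀ *ᵥ x) := by
    rw [sqNorm_mulVec, hRR, sqNorm_mulVec, transpose_transpose, sqNorm_eq_dotProduct_self,
      sub_mulVec, one_mulVec, dotProduct_sub]
  linarith [sqNorm_nonneg (R *ᵥ x)]

lemma frobSq_eq_sum_sqNorm_mulVec_single (M : Matrix (Fin m) (Fin d) ℝ) :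
    frobSq M = ∑ t, sqNorm (M *ᵥ Pi.single t 1) := by
  rw [frobSq, sum_comm]
  simp [sqNorm, mulVec, dotProduct, Pi.single_apply]

lemma frobSq_eq_trace (M : Matrix (Fin m) (Fin d) ℝ) : frobSq M = (Mᵀ * M).trace := by
  rw [frobSq, sum_comm]
  simp [Matrix.trace, mul_apply, sq]

lemma frobSq_transpose_of_transpose_mul_self_eq_one {Y : Matrix (Fin d) (Fin p) ℝ}
    (hY : Yᵀ * Y = 1) : frobSq Yᵀ = p := by
  rw [frobSq_eq_trace, transpose_transpose, trace_mul_comm, hY, trace_one, Fintype.card_fin]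

end Norms

lemma sum_mul_le_sum_of_threshold {ι : Type*} [Fintype ι] (K : Finset ι) {lam c : ι → ℝ}
    {μ : ℝ} (hμ : 0 ≤ μ) (hK : ∀ a ∈ K, μ ≤ lam a) (hKc : ∀ a ∉ K, lam a ≤ μ)
    (hc0 : ∀ a, 0 ≤ c a) (hc1 : ∀ a, c a ≤ 1) (hsum : ∑ a, c a ≤ #K) :
    ∑ a, lam a * c a ≤ ∑ a ∈ K, lam a := by
  classical
  have hpt : ∀ a, lam a * c a ≤
      (if a ∈ K then lam a else 0) + μ * (c a - if a ∈ K then 1 else 0) := by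
    intro a
    by_cases ha : a ∈ K
    · simp only [ha, if_true]
      nlinarith [hK a ha, hc1 a]
    · simp only [ha, if_false, zero_add, sub_zero]
      exact mul_le_mul_of_nonneg_right (hKc a ha) (hc0 a)
  calc ∑ a, lam a * c a
      ≤ ∑ a, ((if a ∈ K then lam a else 0) + μ * (c a - if a ∈ K then 1 else 0)) :=
        sum_le_sum fun a _ => hpt a
    _ = ∑ a ∈ K, lam a + μ * (∑ a, c a - #K) := by
        simp [sum_add_distrib, ← mul_sum, sum_sub_distrib, sum_ite_mem]
    _ ≤ ∑ a ∈ K, lam a := by nlinarith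

lemma sum_mul_le_sum_filter_lt_of_antitone {d : ℕ} (k : ℕ) {lam c : Fin d → ℝ}
    (hlam : Antitone lam) (hlam0 : ∀ a, 0 ≤ lam a) (hc0 : ∀ a, 0 ≤ c a) (hc1 : ∀ a, c a ≤ 1)
    (hsum : ∑ a, c a ≤ #(univ.filter fun a : Fin d => (a : ℕ) < k)) :
    ∑ a, lam a * c a ≤ ∑ a ∈ univ.filter (fun a : Fin d => (a : ℕ) < k), lam a := by
  by_cases hkd : k < d
  · refine sum_mul_le_sum_of_threshold _ (hlam0 ⟨k, hkd⟩) (fun a ha => ?_) (fun a ha => ?_)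
      hc0 hc1 hsum
    · exact hlam (Fin.mk_le_mk.mpr (mem_filter.mp ha).2.le)
    · exact hlam (Fin.mk_le_mk.mpr (not_lt.mp fun h => ha (mem_filter.mpr ⟨mem_univ a, h⟩)))
  · refine sum_mul_le_sum_of_threshold _ le_rfl (fun a _ => hlam0 a) (fun a ha => ?_)
      hc0 hc1 hsum
    exact absurd (mem_filter.mpr ⟨mem_univ a, a.isLt.trans_le (not_lt.mp hkd)⟩) ha

def IsOrthonormalFamily {d : ℕ} (v : Fin d → Fin d → ℝ) : Prop :=
  ∀ a b, ∑ t, v a t * v b t = if a = b then 1 else 0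

section Orthonormal

variable {m d : ℕ} {v w : Fin d → Fin d → ℝ}

lemma transpose_mul_self_of_orthonormal (hv : IsOrthonormalFamily v) : (of v)ᵀ * of v = 1 := by
  refine mul_eq_one_comm.mp ?_
  ext a b
  simpa [mul_apply, one_apply] using hv a b

lemma sqNorm_of_orthonormal (hv : IsOrthonormalFamily v) (a : Fin d) : sqNorm (v a) = 1 := by
  simpa [sqNorm, sq] using hv a a

lemma sum_sq_dotProduct_of_orthonormal (hv : IsOrthonormalFamily v) (x : Fin d → ℝ) :
    ∑ a, (v a ⬝ᵥ x) ^ 2 = sqNorm x :=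
  sqNorm_mulVec_of_transpose_mul_self_eq_one (transpose_mul_self_of_orthonormal hv) x

variable {M : Matrix (Fin m) (Fin d) ℝ} {σ : Fin d → ℝ}

lemma sqNorm_mulVec_eq_sum_of_eigen (hv : IsOrthonormalFamily v)
    (hMv : ∀ a, (Mᵀ * M) *ᵥ v a = σ a ^ 2 • v a) (x : Fin d → ℝ) :
    sqNorm (M *ᵥ x) = ∑ a, σ a ^ 2 * (v a ⬝ᵥ x) ^ 2 := by
  set V : Matrix (Fin d) (Fin d) ℝ := of v
  have hcols : (Mᵀ * M) * Vᵀ = Vᵀ * diagonal (fun a => σ a ^ 2) := by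
    ext t a
    have h := congrFun (hMv a) t
    simp only [mulVec, dotProduct, Pi.smul_apply, smul_eq_mul, mul_apply, transpose_apply] at h
    rw [mul_diagonal]
    simp only [mul_apply, transpose_apply, V, of_apply, h]
    ring
  have hdiag : Mᵀ * M = Vᵀ * diagonal (fun a => σ a ^ 2) * V := by
    rw [← hcols, Matrix.mul_assoc, transpose_mul_self_of_orthonormal hv, Matrix.mul_one]
  rw [sqNorm_mulVec, hdiag, ← mulVec_mulVec, ← mulVec_mulVec, dotProduct_mulVec x,
    vecMul_transpose]
  simp only [dotProduct, mulVec_diagonal]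
  exact sum_congr rfl fun a _ => by simp only [V, mulVec, dotProduct, of_apply]; ring

lemma sqNorm_mulVec_eigenvector (hv : IsOrthonormalFamily v)
    (hMv : ∀ a, (Mᵀ * M) *ᵥ v a = σ a ^ 2 • v a) (a : Fin d) :
    sqNorm (M *ᵥ v a) = σ a ^ 2 := by
  rw [sqNorm_mulVec, hMv, dotProduct_smul, ← sqNorm_eq_dotProduct_self,
    sqNorm_of_orthonormal hv, smul_eq_mul, mul_one]

/-- Ky Fan's maximum principle. -/
lemma sum_filter_sqNorm_mulVec_le_of_eigen (k : ℕ) (hv : IsOrthonormalFamily v)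
    (hσ : Antitone σ) (hσ0 : ∀ a, 0 ≤ σ a) (hMv : ∀ a, (Mᵀ * M) *ᵥ v a = σ a ^ 2 • v a)
    (hw : IsOrthonormalFamily w) :
    ∑ i ∈ univ.filter (fun i : Fin d => (i : ℕ) < k), sqNorm (M *ᵥ w i) ≤
      ∑ i ∈ univ.filter (fun i : Fin d => (i : ℕ) < k), sqNorm (M *ᵥ v i) := by
  set K := univ.filter (fun i : Fin d => (i : ℕ) < k)
  have hc1 : ∀ a, ∑ i ∈ K, (v a ⬝ᵥ w i) ^ 2 ≤ 1 := fun a => calc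
    _ ≤ ∑ i, (w i ⬝ᵥ v a) ^ 2 := by
      simp only [dotProduct_comm (v a)]
      exact sum_le_univ_sum_of_nonneg fun _ => sq_nonneg _
    _ = 1 := by rw [sum_sq_dotProduct_of_orthonormal hw, sqNorm_of_orthonormal hv]
  have hsum : ∑ a, ∑ i ∈ K, (v a ⬝ᵥ w i) ^ 2 = #K := by
    rw [sum_comm]
    simp [sum_sq_dotProduct_of_orthonormal hv, sqNorm_of_orthonormal hw]
  simp only [sqNorm_mulVec_eigenvector hv hMv]
  simp only [sqNorm_mulVec_eq_sum_of_eigen hv hMv]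
  rw [sum_comm]
  simp only [← mul_sum]
  exact sum_mul_le_sum_filter_lt_of_antitone k
    (fun a b hab => pow_le_pow_left₀ (hσ0 b) (hσ hab) 2) (fun a => sq_nonneg _)
    (fun a => sum_nonneg fun _ _ => sq_nonneg _) hc1 hsum.le

end Orthonormal

section Projection

variable {m d : ℕ} {y : Fin d → Fin d → ℝ}

lemma sqNorm_sub_sum_smul_of_orthonormal (hy : IsOrthonormalFamily y) (K : Finset (Fin d))
    (u : Fin d → ℝ) :
    sqNorm (u - ∑ i ∈ K, (u ⬝ᵥ y i) • y i) = sqNorm u - ∑ i ∈ K, (u ⬝ᵥ y i) ^ 2 := by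
  classical
  have hcoef : ∀ j, y j ⬝ᵥ (u - ∑ i ∈ K, (u ⬝ᵥ y i) • y i) =
      if j ∈ K then 0 else u ⬝ᵥ y j := by
    intro j
    have hyy : ∀ i, y j ⬝ᵥ y i = if j = i then 1 else 0 := hy j
    simp only [dotProduct_sub, dotProduct_comm (y j) u, dotProduct_sum, dotProduct_smul, hyy,
      smul_eq_mul, mul_ite, mul_one, mul_zero, sum_ite_eq]
    split_ifs <;> ring
  have hsq : ∀ j, (if j ∈ K then 0 else u ⬝ᵥ y j) ^ 2 =
      (u ⬝ᵥ y j) ^ 2 - if j ∈ K then (u ⬝ᵥ y j) ^ 2 else 0 := by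
    intro j
    split_ifs <;> ring
  rw [← sum_sq_dotProduct_of_orthonormal hy, ← sum_sq_dotProduct_of_orthonormal hy u]
  simp only [hcoef, hsq, dotProduct_comm (y _) u, sum_sub_distrib, sum_ite_mem, univ_inter]

lemma frobSq_sub_proj_of_orthonormal (hy : IsOrthonormalFamily y) (K : Finset (Fin d))
    (A : Matrix (Fin m) (Fin d) ℝ) :
    frobSq (A - of fun r t => ∑ i ∈ K, (∑ t', A r t' * y i t') * y i t) =
      frobSq A - ∑ i ∈ K, sqNorm (A *ᵥ y i) := by
  have hrows : (A - of fun r t => ∑ i ∈ K, (∑ t', A r t' * y i t') * y i t) =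
      of fun r => A r - ∑ i ∈ K, (A r ⬝ᵥ y i) • y i := by
    ext r t
    simp [dotProduct]
  calc _ = ∑ r, sqNorm (A r - ∑ i ∈ K, (A r ⬝ᵥ y i) • y i) := by rw [hrows]; rfl
    _ = ∑ r, (sqNorm (A r) - ∑ i ∈ K, (A r ⬝ᵥ y i) ^ 2) := by
      simp only [sqNorm_sub_sum_smul_of_orthonormal hy]
    _ = frobSq A - ∑ i ∈ K, sqNorm (A *ᵥ y i) := by rw [sum_sub_distrib, sum_comm]; rfl

end Projection

section FrequentDirections

variable {ℓ d : ℕ}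

lemma sqNorm_updateRow_mulVec {P : Matrix (Fin ℓ) (Fin d) ℝ} {r : Fin ℓ} (hP : P r = 0)
    (a x : Fin d → ℝ) : sqNorm (P.updateRow r a *ᵥ x) = sqNorm (P *ᵥ x) + (a ⬝ᵥ x) ^ 2 := by
  have hPx : (P *ᵥ x) r = 0 := by simp [mulVec, hP]
  rw [updateRow_mulVec, sqNorm, sqNorm, ← add_sum_erase _ _ (mem_univ r),
    ← add_sum_erase _ _ (mem_univ r), Function.update_self, hPx,
    sum_congr rfl fun j hj => by rw [Function.update_of_ne (ne_of_mem_erase hj)]]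
  ring

lemma sqNorm_shrink_mulVec {P : Matrix (Fin ℓ) (Fin d) ℝ} {r : Fin ℓ} (hP : P r = 0)
    {a : Fin d → ℝ} {Z : Matrix (Fin ℓ) (Fin ℓ) ℝ} {Y : Matrix (Fin d) (Fin ℓ) ℝ}
    {s : Fin ℓ → ℝ} {δ : ℝ} (hZ : Zᵀ * Z = 1) (hSVD : P.updateRow r a = Z * diagonal s * Yᵀ)
    (hδ : ∀ j, δ ≤ s j ^ 2) (x : Fin d → ℝ) :
    sqNorm ((diagonal (fun j => √(s j ^ 2 - δ)) * Yᵀ) *ᵥ x) =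
      sqNorm (P *ᵥ x) + (a ⬝ᵥ x) ^ 2 - δ * sqNorm (Yᵀ *ᵥ x) := by
  have hC : sqNorm (P.updateRow r a *ᵥ x) = ∑ j, s j ^ 2 * (Yᵀ *ᵥ x) j ^ 2 := by
    rw [hSVD, ← mulVec_mulVec, ← mulVec_mulVec, sqNorm_mulVec_of_transpose_mul_self_eq_one hZ,
      sqNorm_diagonal_mulVec]
  rw [← sqNorm_updateRow_mulVec hP, hC, ← mulVec_mulVec, sqNorm_diagonal_mulVec, sqNorm,
    mul_sum, ← sum_sub_distrib]
  refine sum_congr rfl fun j _ => ?_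
  rw [Real.sq_sqrt (sub_nonneg.mpr (hδ j))]
  ring

lemma Fin.sum_succ_sub_castSucc {M : Type*} [AddCommGroup M] {n : ℕ} (f : Fin (n + 1) → M) :
    ∑ i : Fin n, (f i.succ - f i.castSucc) = f (Fin.last n) - f 0 := by
  induction n with
  | zero => simp
  | succ n ih =>
    rw [Fin.sum_univ_castSucc]
    simp only [Fin.succ_castSucc]
    rw [ih (fun i => f i.castSucc), Fin.castSucc_zero, Fin.succ_last]
    abel

lemma sqNorm_mulVec_frequentDirections {n : ℕ} (r : Fin ℓ) (A : Matrix (Fin n) (Fin d) ℝ)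
    {Q : Fin (n + 1) → Matrix (Fin ℓ) (Fin d) ℝ} {Z : Fin n → Matrix (Fin ℓ) (Fin ℓ) ℝ}
    {Y : Fin n → Matrix (Fin d) (Fin ℓ) ℝ} {s : Fin n → Fin ℓ → ℝ} {δ : Fin n → ℝ}
    (hQ0 : Q 0 = 0) (hZ : ∀ i, (Z i)ᵀ * Z i = 1)
    (hSVD : ∀ i, (Q i.castSucc).updateRow r (A i) = Z i * diagonal (s i) * (Y i)ᵀ)
    (hδ : ∀ i j, δ i ≤ s i j ^ 2) (hδr : ∀ i, δ i = s i r ^ 2)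
    (hQs : ∀ i, Q i.succ = diagonal (fun j => √(s i j ^ 2 - δ i)) * (Y i)ᵀ) (x : Fin d → ℝ) :
    sqNorm (Q (Fin.last n) *ᵥ x) = sqNorm (A *ᵥ x) - ∑ i, δ i * sqNorm ((Y i)ᵀ *ᵥ x) := by
  have hrow : ∀ i, Q i r = 0 := by
    refine Fin.cases (by rw [hQ0]; rfl) fun i => ?_
    ext t
    simp [hQs, diagonal_mul, hδr]
  have hstep : ∀ i : Fin n, sqNorm (Q i.succ *ᵥ x) - sqNorm (Q i.castSucc *ᵥ x) =
      (A i ⬝ᵥ x) ^ 2 - δ i * sqNorm ((Y i)ᵀ *ᵥ x) := fun i => by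
    rw [hQs, sqNorm_shrink_mulVec (hrow _) (hZ i) (hSVD i) (hδ i)]
    ring
  have htel := Fin.sum_succ_sub_castSucc fun i => sqNorm (Q i *ᵥ x)
  simp only [hstep, hQ0, zero_mulVec, sum_sub_distrib] at htel
  have hA : sqNorm (A *ᵥ x) = ∑ i, (A i ⬝ᵥ x) ^ 2 := rfl
  have h0 : sqNorm (0 : Fin ℓ → ℝ) = 0 := by simp [sqNorm]
  linarith

section Sketch

variable {m p d : ℕ} {A : Matrix (Fin m) (Fin d) ℝ} {B : Matrix (Fin p) (Fin d) ℝ}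

lemma frobSq_nonneg (M : Matrix (Fin m) (Fin d) ℝ) : 0 ≤ frobSq M :=
  sum_nonneg fun i _ => sqNorm_nonneg (M i)

lemma sum_sqNorm_mulVec_le_frobSq {y : Fin d → Fin d → ℝ}
    (hy : IsOrthonormalFamily y) (K : Finset (Fin d)) :
    ∑ i ∈ K, sqNorm (B *ᵥ y i) ≤ frobSq B := by
  linarith [frobSq_sub_proj_of_orthonormal hy K B, frobSq_nonneg (B - of fun r t =>
    ∑ i ∈ K, (∑ t', B r t' * y i t') * y i t)]

lemma frobSq_eq_add_of_sqNorm_mulVec_eq {n ℓ : ℕ} {Y : Fin n → Matrix (Fin d) (Fin ℓ) ℝ}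
    {δ : Fin n → ℝ} (hY : ∀ i, (Y i)ᵀ * Y i = 1)
    (h : ∀ x, sqNorm (B *ᵥ x) = sqNorm (A *ᵥ x) - ∑ i, δ i * sqNorm ((Y i)ᵀ *ᵥ x)) :
    frobSq A = frobSq B + ℓ * ∑ i, δ i := by
  have hcols : ∀ i, ∑ t, sqNorm ((Y i)ᵀ *ᵥ Pi.single t 1) = ℓ := fun i => by
    rw [← frobSq_eq_sum_sqNorm_mulVec_single,
      frobSq_transpose_of_transpose_mul_self_eq_one (hY i)]
  simp only [frobSq_eq_sum_sqNorm_mulVec_single, h, sum_sub_distrib]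
  rw [sum_comm]
  simp only [← mul_sum, hcols, mul_comm (ℓ : ℝ), sum_mul]
  ring

lemma sum_mul_sqNorm_transpose_mulVec_le {n ℓ : ℕ} {Y : Fin n → Matrix (Fin d) (Fin ℓ) ℝ}
    {δ : Fin n → ℝ} (hδ : ∀ i, 0 ≤ δ i) (hY : ∀ i, (Y i)ᵀ * Y i = 1) (x : Fin d → ℝ) :
    ∑ i, δ i * sqNorm ((Y i)ᵀ *ᵥ x) ≤ (∑ i, δ i) * sqNorm x := by
  rw [sum_mul]
  exact sum_le_sum fun i _ =>
    mul_le_mul_of_nonneg_left (sqNorm_transpose_mulVec_le (hY i) x) (hδ i)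

variable {v y : Fin d → Fin d → ℝ} {τ : Fin d → ℝ} {Δ : ℝ}

lemma sum_filter_sqNorm_mulVec_sub_le (k : ℕ)
    (hup : ∀ x, sqNorm (A *ᵥ x) ≤ sqNorm (B *ᵥ x) + Δ * sqNorm x) (hΔ : 0 ≤ Δ)
    (hv : IsOrthonormalFamily v) (hy : IsOrthonormalFamily y) (hτ : Antitone τ)
    (hτ0 : ∀ a, 0 ≤ τ a) (hBy : ∀ a, (Bᵀ * B) *ᵥ y a = τ a ^ 2 • y a) :
    ∑ i ∈ univ.filter (fun i : Fin d => (i : ℕ) < k), sqNorm (A *ᵥ v i) - k * Δ ≤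
      ∑ i ∈ univ.filter (fun i : Fin d => (i : ℕ) < k), sqNorm (B *ᵥ y i) := by
  set K := univ.filter (fun i : Fin d => (i : ℕ) < k)
  have hK : (#K : ℝ) ≤ k := by
    exact_mod_cast Fin.card_filter_val_lt.trans_le (min_le_right _ _)
  calc ∑ i ∈ K, sqNorm (A *ᵥ v i) - k * Δ
      ≤ ∑ i ∈ K, (sqNorm (A *ᵥ v i) - Δ) := by
        rw [sum_sub_distrib, sum_const, nsmul_eq_mul]
        linarith [mul_le_mul_of_nonneg_right hK hΔ]
    _ ≤ ∑ i ∈ K, sqNorm (B *ᵥ v i) := sum_le_sum fun i _ => by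
        have h := hup (v i)
        rw [sqNorm_of_orthonormal hv i, mul_one] at h
        linarith
    _ ≤ ∑ i ∈ K, sqNorm (B *ᵥ y i) := sum_filter_sqNorm_mulVec_le_of_eigen k hy hτ hτ0 hBy hv

lemma mul_le_mul_frobSq_sub_sum {k ℓ : ℕ} {ε : ℝ} (hε : 0 < ε) (hℓ : k + k / ε ≤ ℓ)
    (hΔ : 0 ≤ Δ) (hfrob : frobSq A = frobSq B + ℓ * Δ)
    (hy : IsOrthonormalFamily y)
    (hhead : ∑ i ∈ univ.filter (fun i : Fin d => (i : ℕ) < k), sqNorm (A *ᵥ v i) - k * Δ ≤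
      ∑ i ∈ univ.filter (fun i : Fin d => (i : ℕ) < k), sqNorm (B *ᵥ y i)) :
    k * Δ ≤ ε * (frobSq A -
      ∑ i ∈ univ.filter (fun i : Fin d => (i : ℕ) < k), sqNorm (A *ᵥ v i)) := by
  have htail : (ℓ - k) * Δ ≤
      frobSq A - ∑ i ∈ univ.filter (fun i : Fin d => (i : ℕ) < k), sqNorm (A *ᵥ v i) := by
    linarith [sum_sqNorm_mulVec_le_frobSq (B := B) hy (univ.filter fun i : Fin d => (i : ℕ) < k)]
  have hkε : k * Δ = ε * (k / ε * Δ) := by field_simp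
  rw [hkε]
  exact mul_le_mul_of_nonneg_left
    ((mul_le_mul_of_nonneg_right (by linarith) hΔ).trans htail) hε.le

end Sketch

theorem fd_main_theorem_general
    (n d ℓ : ℕ) (hℓ : 0 < ℓ)
    (A : Matrix (Fin n) (Fin d) ℝ)
    (Q : Fin (n + 1) → Matrix (Fin ℓ) (Fin d) ℝ)
    (C : Fin n → Matrix (Fin ℓ) (Fin d) ℝ)
    (Z : Fin n → Matrix (Fin ℓ) (Fin ℓ) ℝ)
    (Y : Fin n → Matrix (Fin d) (Fin ℓ) ℝ)
    (s : Fin n → Fin ℓ → ℝ) (δ : Fin n → ℝ)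
    -- the algorithm starts with the zero matrix
    (hQ0 : Q 0 = 0)
    -- `C i` is `Q^{i-1}` with its last row replaced by the `i`-th row of `A`
    (hC : ∀ i : Fin n,
      C i = (Q i.castSucc).updateRow ⟨ℓ - 1, Nat.sub_lt hℓ Nat.one_pos⟩ (A i))
    -- a singular value decomposition `C i = Z S Yᵀ` of `C i`
    (hZ : ∀ i, (Z i)ᵀ * Z i = 1)
    (hY : ∀ i, (Y i)ᵀ * Y i = 1)
    (hSVD : ∀ i, C i = Z i * Matrix.diagonal (s i) * (Y i)ᵀ)
    (hmono : ∀ i, ∀ j j' : Fin ℓ, j ≤ j' → s i j' ≤ s i j)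
    (hnn : ∀ i j, 0 ≤ s i j)
    -- `δ i` is the square of the smallest singular value of `C i`
    (hδ : ∀ i, δ i = s i ⟨ℓ - 1, Nat.sub_lt hℓ Nat.one_pos⟩ ^ 2)
    -- the shrinking step producing `Q^i = S' Yᵀ`
    (hQs : ∀ i : Fin n,
      Q i.succ = Matrix.diagonal (fun j => Real.sqrt (s i j ^ 2 - δ i)) * (Y i)ᵀ)
    -- `v` is an orthonormal family of right singular vectors of `A`,
    -- ordered by decreasing singular values `σA`
    (v : Fin d → Fin d → ℝ) (σA : Fin d → ℝ)
    (hv : ∀ a b : Fin d, ∑ t, v a t * v b t = if a = b then 1 else 0)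
    (hσmono : ∀ a b : Fin d, a ≤ b → σA b ≤ σA a)
    (hσnn : ∀ a, 0 ≤ σA a)
    (hAv : ∀ a, (Aᵀ * A).mulVec (v a) = σA a ^ 2 • v a)
    -- `y` is an orthonormal family of right singular vectors of the output
    -- matrix `Q = Qⁿ`, ordered by decreasing singular values `τ`
    (y : Fin d → Fin d → ℝ) (τ : Fin d → ℝ)
    (hy : ∀ a b : Fin d, ∑ t, y a t * y b t = if a = b then 1 else 0)
    (hτmono : ∀ a b : Fin d, a ≤ b → τ b ≤ τ a)
    (hτnn : ∀ a, 0 ≤ τ a)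
    (hQy : ∀ a, ((Q (Fin.last n))ᵀ * Q (Fin.last n)).mulVec (y a) = τ a ^ 2 • y a)
    (ε : ℝ) (hε0 : 0 < ε) (k : ℕ)
    (hℓdef : ℓ = ⌈(k : ℝ) + (k : ℝ) / ε⌉₊)
 :
    (∀ x : Fin d → ℝ, sqNorm x = 1 →
      0 ≤ sqNorm (A.mulVec x) - sqNorm ((Q (Fin.last n)).mulVec x) ∧
      sqNorm (A.mulVec x) - sqNorm ((Q (Fin.last n)).mulVec x) ≤
        frobSq A / (ℓ : ℝ)) ∧
    frobSq (A - (Matrix.of fun rr t =>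
      ∑ i ∈ Finset.univ.filter (fun i : Fin d => (i : ℕ) < k),
        (∑ t', A rr t' * y i t') * y i t)) ≤
      (1 + ε) * (frobSq A - ∑ i ∈ Finset.univ.filter (fun i : Fin d => (i : ℕ) < k), sqNorm (A.mulVec (v i))) ∧
    (frobSq A - (∑ i ∈ Finset.univ.filter (fun i : Fin d => (i : ℕ) < k), sqNorm (A.mulVec (v i))) ≤
      frobSq A - (∑ i ∈ Finset.univ.filter (fun i : Fin d => (i : ℕ) < k),
      sqNorm ((Q (Fin.last n)).mulVec (y i))) ∧
    frobSq A - (∑ i ∈ Finset.univ.filter (fun i : Fin d => (i : ℕ) < k),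
      sqNorm ((Q (Fin.last n)).mulVec (y i))) ≤
      (1 + ε) * (frobSq A - ∑ i ∈ Finset.univ.filter (fun i : Fin d => (i : ℕ) < k), sqNorm (A.mulVec (v i)))) := by
  have hδ0 : ∀ i, 0 ≤ δ i := fun i => hδ i ▸ sq_nonneg _
  have hδle : ∀ i j, δ i ≤ s i j ^ 2 := fun i j => hδ i ▸
    pow_le_pow_left₀ (hnn i _) (hmono i j _ (Fin.mk_le_mk.mpr (Nat.le_sub_one_of_lt j.isLt))) 2
  have hid := sqNorm_mulVec_frequentDirections _ A hQ0 hZ (fun i => (hC i).symm.trans (hSVD i))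
    hδle hδ hQs
  have hgap : ∀ x, 0 ≤ ∑ i, δ i * sqNorm ((Y i)ᵀ *ᵥ x) := fun x =>
    sum_nonneg fun i _ => mul_nonneg (hδ0 i) (sqNorm_nonneg _)
  have hup := sum_mul_sqNorm_transpose_mulVec_le hδ0 hY
  have hΔ : 0 ≤ ∑ i, δ i := sum_nonneg fun i _ => hδ0 i
  have hfrob := frobSq_eq_add_of_sqNorm_mulVec_eq hY hid
  have hhead := sum_filter_sqNorm_mulVec_sub_le (A := A) k (fun x => by linarith [hid x, hup x])
    hΔ hv hy hτmono hτnn hQy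
  have htail := mul_le_mul_frobSq_sub_sum hε0 (hℓdef ▸ Nat.le_ceil _) hΔ hfrob hy hhead
  have hQA : ∑ i ∈ univ.filter (fun i : Fin d => (i : ℕ) < k), sqNorm (Q (Fin.last n) *ᵥ y i) ≤
      ∑ i ∈ univ.filter (fun i : Fin d => (i : ℕ) < k), sqNorm (A *ᵥ y i) :=
    sum_le_sum fun i _ => by linarith [hid (y i), hgap (y i)]
  have hAk := sum_filter_sqNorm_mulVec_le_of_eigen k hv hσmono hσnn hAv hy
  refine ⟨fun x hx => ⟨by linarith [hid x, hgap x], ?_⟩, ?_, by linarith, by linarith⟩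
  · have hΔA : (∑ i, δ i) ≤ frobSq A / ℓ := by
      rw [le_div_iff₀ (by exact_mod_cast hℓ)]
      linarith [frobSq_nonneg (Q (Fin.last n))]
    have hAx := hup x
    rw [hx, mul_one] at hAx
    linarith [hid x]
  · rw [frobSq_sub_proj_of_orthonormal hy]
    linarith

/-- Summary theorem for Frequent Directions with `ℓ = ⌈k + k/ε⌉`:
(i) for every unit vector `x`, `0 ≤ ‖Ax‖² - ‖Qx‖² ≤ ‖A‖_F²/ℓ`;
(ii) `‖A - π_{Q_k}(A)‖_F² ≤ (1 + ε) ‖A - A_k‖_F²`; and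
(iii) `‖A‖_F² - ‖A_k‖_F² ≤ ‖A‖_F² - ‖Q_k‖_F² ≤ (1 + ε)(‖A‖_F² - ‖A_k‖_F²)`. -/
theorem fd_main_theorem
    (n d ℓ : ℕ) (hℓ : 0 < ℓ)
    (A : Matrix (Fin n) (Fin d) ℝ)
    (Q : Fin (n + 1) → Matrix (Fin ℓ) (Fin d) ℝ)
    (C : Fin n → Matrix (Fin ℓ) (Fin d) ℝ)
    (Z : Fin n → Matrix (Fin ℓ) (Fin ℓ) ℝ)
    (Y : Fin n → Matrix (Fin d) (Fin ℓ) ℝ)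
    (s : Fin n → Fin ℓ → ℝ) (δ : Fin n → ℝ)
    -- the algorithm starts with the zero matrix
    (hQ0 : Q 0 = 0)
    -- `C i` is `Q^{i-1}` with its last row replaced by the `i`-th row of `A`
    (hC : ∀ i : Fin n,
      C i = (Q i.castSucc).updateRow ⟨ℓ - 1, Nat.sub_lt hℓ Nat.one_pos⟩ (A i))
    -- a singular value decomposition `C i = Z S Yᵀ` of `C i`
    (hZ : ∀ i, (Z i)ᵀ * Z i = 1)
    (hY : ∀ i, (Y i)ᵀ * Y i = 1)
    (hSVD : ∀ i, C i = Z i * Matrix.diagonal (s i) * (Y i)ᵀ)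
    (hmono : ∀ i, ∀ j j' : Fin ℓ, j ≤ j' → s i j' ≤ s i j)
    (hnn : ∀ i j, 0 ≤ s i j)
    -- `δ i` is the square of the smallest singular value of `C i`
    (hδ : ∀ i, δ i = s i ⟨ℓ - 1, Nat.sub_lt hℓ Nat.one_pos⟩ ^ 2)
    -- the shrinking step producing `Q^i = S' Yᵀ`
    (hQs : ∀ i : Fin n,
      Q i.succ = Matrix.diagonal (fun j => Real.sqrt (s i j ^ 2 - δ i)) * (Y i)ᵀ)
    -- `v` is an orthonormal family of right singular vectors of `A`,
    -- ordered by decreasing singular values `σA`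
    (v : Fin d → Fin d → ℝ) (σA : Fin d → ℝ)
    (hv : ∀ a b : Fin d, ∑ t, v a t * v b t = if a = b then 1 else 0)
    (hσmono : ∀ a b : Fin d, a ≤ b → σA b ≤ σA a)
    (hσnn : ∀ a, 0 ≤ σA a)
    (hAv : ∀ a, (Aᵀ * A).mulVec (v a) = σA a ^ 2 • v a)
    -- `y` is an orthonormal family of right singular vectors of the output
    -- matrix `Q = Qⁿ`, ordered by decreasing singular values `τ`
    (y : Fin d → Fin d → ℝ) (τ : Fin d → ℝ)
    (hy : ∀ a b : Fin d, ∑ t, y a t * y b t = if a = b then 1 else 0)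
    (hτmono : ∀ a b : Fin d, a ≤ b → τ b ≤ τ a)
    (hτnn : ∀ a, 0 ≤ τ a)
    (hQy : ∀ a, ((Q (Fin.last n))ᵀ * Q (Fin.last n)).mulVec (y a) = τ a ^ 2 • y a)
    (ε : ℝ) (hε0 : 0 < ε) (hε1 : ε ≤ 1) (k : ℕ) (hk : 1 ≤ k)
    (hℓdef : ℓ = ⌈(k : ℝ) + (k : ℝ) / ε⌉₊)
 :
    (∀ x : Fin d → ℝ, sqNorm x = 1 →
      0 ≤ sqNorm (A.mulVec x) - sqNorm ((Q (Fin.last n)).mulVec x) ∧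
      sqNorm (A.mulVec x) - sqNorm ((Q (Fin.last n)).mulVec x) ≤
        frobSq A / (ℓ : ℝ)) ∧
    frobSq (A - (Matrix.of fun rr t =>
      ∑ i ∈ Finset.univ.filter (fun i : Fin d => (i : ℕ) < k),
        (∑ t', A rr t' * y i t') * y i t)) ≤
      (1 + ε) * (frobSq A - ∑ i ∈ Finset.univ.filter (fun i : Fin d => (i : ℕ) < k), sqNorm (A.mulVec (v i))) ∧
    (frobSq A - (∑ i ∈ Finset.univ.filter (fun i : Fin d => (i : ℕ) < k), sqNorm (A.mulVec (v i))) ≤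
      frobSq A - (∑ i ∈ Finset.univ.filter (fun i : Fin d => (i : ℕ) < k),
      sqNorm ((Q (Fin.last n)).mulVec (y i))) ∧
    frobSq A - (∑ i ∈ Finset.univ.filter (fun i : Fin d => (i : ℕ) < k),
      sqNorm ((Q (Fin.last n)).mulVec (y i))) ≤
      (1 + ε) * (frobSq A - ∑ i ∈ Finset.univ.filter (fun i : Fin d => (i : ℕ) < k), sqNorm (A.mulVec (v i)))) :=
  fd_main_theorem_general n d ℓ hℓ A Q C Z Y s δ hQ0 hC hZ hY hSVD hmono hnn hδ hQs v σA hv hσmono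
    hσnn hAv y τ hy hτmono hτnn hQy ε hε0 k hℓdef
end FrequentDirections
end

section
/- Fix an integer ℓ ≥ 1 and d ≥ ℓ + 1, and let Q be the ℓ×d real matrix whose j-th row is e_1 + e_{j+1} (where e_1,…,e_d is the standard basis of ℝ^d). Let Q̂ be any (ℓ−1)×d matrix whose j-th row, for j = 1,…,ℓ−1, is (ŵ_j/√2)(e_1 + e_{j+1}) for real weights ŵ_j (i.e., Q̂ is obtained from Q by deleting the last row and re-weighting the remaining rows). If for some real c > 0 both (P1) ‖Q̂‖_F² ≤ ‖Q‖_F² − cℓ and (P2) ‖Q e_1‖² ≤ ‖Q̂ e_1‖² + 1 hold, then c ≤ 2/ℓ. -/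
open Matrix

/-- Hard construction: no sparse Frequent Directions.  Let `Q` be the
`ℓ × d` matrix whose `j`-th row is `e₁ + e_{j+1}`, and let `Q̂` be any
`(ℓ-1) × d` matrix obtained from `Q` by deleting the last row and re-weighting
the remaining rows, the `j`-th row of `Q̂` being `(ŵ_j/√2)(e₁ + e_{j+1})`.
If `(P1) ‖Q̂‖_F² ≤ ‖Q‖_F² - cℓ` and `(P2) ‖Q e₁‖² ≤ ‖Q̂ e₁‖² + 1` both hold for
some real `c > 0`, then `c ≤ 2/ℓ`. -/
theorem no_sparse_frequent_directions
    (ℓ d : ℕ) (hℓ : 1 ≤ ℓ) (hd : ℓ + 1 ≤ d)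
    (w : Fin (ℓ - 1) → ℝ) (c : ℝ) (hc : 0 < c)
    (Q : Matrix (Fin ℓ) (Fin d) ℝ)
    (hQ : ∀ (j : Fin ℓ) (t : Fin d),
      Q j t = (if (t : ℕ) = 0 then 1 else 0) +
        (if (t : ℕ) = (j : ℕ) + 1 then 1 else 0))
    (Qh : Matrix (Fin (ℓ - 1)) (Fin d) ℝ)
    (hQh : ∀ (j : Fin (ℓ - 1)) (t : Fin d),
      Qh j t = (w j / Real.sqrt 2) *
        ((if (t : ℕ) = 0 then 1 else 0) +
          (if (t : ℕ) = (j : ℕ) + 1 then 1 else 0)))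
    (hP1 : frobSq Qh ≤ frobSq Q - c * (ℓ : ℝ))
    (hP2 : sqNorm (Q.mulVec fun t : Fin d => if (t : ℕ) = 0 then 1 else 0) ≤
      sqNorm (Qh.mulVec fun t : Fin d => if (t : ℕ) = 0 then 1 else 0) + 1) :
    c ≤ 2 / (ℓ : ℝ) := by

  have hd0 : 0 < d := by omega
  set z0 : Fin d := ⟨0, hd0⟩ with hz0
  -- sum of a single indicator
  have hsum : ∀ (k : ℕ) (hk : k < d),
      ∑ t : Fin d, (if (t : ℕ) = k then (1:ℝ) else 0) = 1 := by
    intro k hk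
    rw [Fintype.sum_eq_single (⟨k, hk⟩ : Fin d)]
    · simp
    · intro t ht
      simp only [ne_eq, Fin.ext_iff] at ht
      simp [ht]
  -- row sums of Q
  have hrowQ : ∀ j : Fin ℓ, ∑ t : Fin d, (Q j t) ^ 2 = 2 := by
    intro j
    have hj : (j : ℕ) + 1 < d := by have := j.isLt; omega
    have key : ∀ t : Fin d, (Q j t) ^ 2 =
        (if (t : ℕ) = 0 then (1:ℝ) else 0) +
        (if (t : ℕ) = (j : ℕ) + 1 then (1:ℝ) else 0) := by
      intro t
      rw [hQ]
      by_cases h0 : (t : ℕ) = 0 <;> by_cases h1 : (t : ℕ) = (j : ℕ) + 1 <;>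
        simp [h0, h1] <;> omega
    rw [Finset.sum_congr rfl fun t _ => key t, Finset.sum_add_distrib,
      hsum 0 hd0, hsum _ hj]
    norm_num
  -- row sums of Qh
  have hrowQh : ∀ j : Fin (ℓ - 1), ∑ t : Fin d, (Qh j t) ^ 2 = (w j) ^ 2 := by
    intro j
    have hj : (j : ℕ) + 1 < d := by have := j.isLt; omega
    have key : ∀ t : Fin d, (Qh j t) ^ 2 =
        (w j) ^ 2 / 2 * ((if (t : ℕ) = 0 then (1:ℝ) else 0) +
        (if (t : ℕ) = (j : ℕ) + 1 then (1:ℝ) else 0)) := by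
      intro t
      rw [hQh]
      have h2 : (Real.sqrt 2) ^ 2 = 2 := Real.sq_sqrt (by norm_num)
      by_cases h0 : (t : ℕ) = 0 <;> by_cases h1 : (t : ℕ) = (j : ℕ) + 1 <;>
        first
        | (exfalso; omega)
        | (simp [h0, h1, div_pow, h2]; try ring)
    rw [Finset.sum_congr rfl fun t _ => key t, ← Finset.mul_sum,
      Finset.sum_add_distrib, hsum 0 hd0, hsum _ hj]
    ring
  have hFQ : frobSq Q = 2 * (ℓ : ℝ) := by
    unfold frobSq
    rw [Finset.sum_congr rfl fun j _ => hrowQ j]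
    simp [mul_comm]
  have hFQh : frobSq Qh = ∑ j, (w j) ^ 2 := by
    unfold frobSq
    exact Finset.sum_congr rfl fun j _ => hrowQh j
  -- mulVec with e₁
  have hmv : ∀ {m : ℕ} (M : Matrix (Fin m) (Fin d) ℝ) (j : Fin m),
      (M.mulVec fun t : Fin d => if (t : ℕ) = 0 then (1:ℝ) else 0) j = M j z0 := by
    intro m M j
    unfold Matrix.mulVec dotProduct
    rw [Fintype.sum_eq_single z0]
    · simp [hz0]
    · intro t ht
      have : (t : ℕ) ≠ 0 := by
        intro h; exact ht (Fin.ext (by simp [hz0, h]))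
      simp [this]
  have hQz0 : ∀ j : Fin ℓ, Q j z0 = 1 := by
    intro j; rw [hQ]; simp [hz0]
  have hQhz0 : ∀ j : Fin (ℓ - 1), Qh j z0 = w j / Real.sqrt 2 := by
    intro j; rw [hQh]; simp [hz0]
  have hN1 : sqNorm (Q.mulVec fun t : Fin d => if (t : ℕ) = 0 then (1:ℝ) else 0)
      = (ℓ : ℝ) := by
    unfold sqNorm
    rw [Finset.sum_congr rfl fun j _ => by rw [hmv, hQz0]]
    simp
  have hN2 : sqNorm (Qh.mulVec fun t : Fin d => if (t : ℕ) = 0 then (1:ℝ) else 0)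
      = (∑ j, (w j) ^ 2) / 2 := by
    unfold sqNorm
    rw [Finset.sum_congr rfl fun j _ => by rw [hmv, hQhz0]]
    rw [Finset.sum_div]
    refine Finset.sum_congr rfl fun j _ => ?_
    rw [div_pow, Real.sq_sqrt (by norm_num : (0:ℝ) ≤ 2)]
  rw [hFQ, hFQh] at hP1
  rw [hN1, hN2] at hP2
  have hℓR : (0:ℝ) < (ℓ : ℝ) := by exact_mod_cast hℓ
  rw [le_div_iff₀ hℓR]
  nlinarith [hP1, hP2]
end

section
/- Let a_1,…,a_n ∈ ℝ^d be the rows of an n×d matrix A, let ℓ ≥ 1 be an integer and c > 0 a real. Suppose Q⁰ is the ℓ×d zero matrix and Q¹,…,Qⁿ are ℓ×d matrices together with reals δ_1,…,δ_n ≥ 0 such that for every i ∈ {1,…,n}: (P2) for every unit vector x ∈ ℝ^d, ‖Q^{i−1}x‖² + ⟨a_i, x⟩² ≤ ‖Q^i x‖² + δ_i; and (P1) ‖Q^i‖_F² ≤ ‖Q^{i−1}‖_F² + ‖a_i‖² − cℓδ_i. Then for every unit vector x ∈ ℝ^d, ‖Ax‖² − ‖Qⁿx‖² ≤ ‖A‖_F²/(cℓ).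 -/
open Matrix

lemma fd_tele {n : ℕ} (f : Fin (n + 1) → ℝ) :
    ∑ i : Fin n, (f i.succ - f i.castSucc) = f (Fin.last n) - f 0 := by
  induction n with
  | zero => simp
  | succ n ih =>
    rw [Fin.sum_univ_castSucc]
    have h := ih (fun i => f i.castSucc)
    simp only [Fin.succ_castSucc] at h ⊢
    rw [h, Fin.succ_last, Fin.castSucc_zero]
    ring

/-- Any streaming row-update sketching procedure starting from the zero
matrix whose per-row update satisfies the directional-error property (P2) with
error `δ_i` and the Frobenius-shrinkage property (P1) with factor `c ℓ`
achieves, for every unit vector `x ∈ ℝ^d`,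
`‖Ax‖² - ‖Qⁿx‖² ≤ ‖A‖_F² / (c ℓ)`. -/
theorem abstract_fd_guarantee
    (n d ℓ : ℕ) (hℓ : 1 ≤ ℓ) (c : ℝ) (hc : 0 < c)
    (A : Matrix (Fin n) (Fin d) ℝ)
    (Q : Fin (n + 1) → Matrix (Fin ℓ) (Fin d) ℝ)
    (δ : Fin n → ℝ) (hδ : ∀ i, 0 ≤ δ i)
    (hQ0 : Q 0 = 0)
    (hP2 : ∀ i : Fin n, ∀ x : Fin d → ℝ, sqNorm x = 1 →
      sqNorm ((Q i.castSucc).mulVec x) + (∑ t, A i t * x t) ^ 2 ≤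
        sqNorm ((Q i.succ).mulVec x) + δ i)
    (hP1 : ∀ i : Fin n,
      frobSq (Q i.succ) ≤ frobSq (Q i.castSucc) + sqNorm (A i) - c * (ℓ : ℝ) * δ i)
    (x : Fin d → ℝ) (hx : sqNorm x = 1) :
    sqNorm (A.mulVec x) - sqNorm ((Q (Fin.last n)).mulVec x) ≤
      frobSq A / (c * (ℓ : ℝ)) := by
  have hcl : 0 < c * (ℓ : ℝ) := by
    have : (0:ℝ) < (ℓ:ℝ) := by exact_mod_cast Nat.lt_of_lt_of_le Nat.zero_lt_one hℓ
    positivity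
  set S := ∑ i, δ i with hS
  -- Step 2: telescoping P2
  have hQ0x : sqNorm ((Q 0).mulVec x) = 0 := by
    simp [hQ0, sqNorm, Matrix.mulVec]
  have hAx : sqNorm (A.mulVec x) = ∑ i, (∑ t, A i t * x t) ^ 2 := by
    simp [sqNorm, Matrix.mulVec, dotProduct]
  have step2 : sqNorm (A.mulVec x) - sqNorm ((Q (Fin.last n)).mulVec x) ≤ S := by
    have h := fd_tele (fun i => sqNorm ((Q i).mulVec x))
    have hsum : ∑ i : Fin n, ((∑ t, A i t * x t) ^ 2 - δ i) ≤
        ∑ i : Fin n, (sqNorm ((Q i.succ).mulVec x) - sqNorm ((Q i.castSucc).mulVec x)) := by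
      apply Finset.sum_le_sum
      intro i _
      have := hP2 i x hx
      linarith
    simp only [h, hQ0x] at hsum
    rw [Finset.sum_sub_distrib] at hsum
    rw [hAx, hS]
    linarith
  -- Step 3: telescoping P1
  have hFA : frobSq A = ∑ i, sqNorm (A i) := by
    simp [frobSq, sqNorm]
  have hFlast : 0 ≤ frobSq (Q (Fin.last n)) := by
    apply Finset.sum_nonneg; intro i _; apply Finset.sum_nonneg; intro j _; positivity
  have step3 : c * (ℓ : ℝ) * S ≤ frobSq A := by
    have h := fd_tele (fun i => frobSq (Q i))
    have hsum : ∑ i : Fin n, (frobSq (Q i.succ) - frobSq (Q i.castSucc)) ≤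
        ∑ i : Fin n, (sqNorm (A i) - c * (ℓ : ℝ) * δ i) := by
      apply Finset.sum_le_sum
      intro i _
      have := hP1 i
      linarith
    simp only [h, hQ0] at hsum
    have hQ0F : frobSq (0 : Matrix (Fin ℓ) (Fin d) ℝ) = 0 := by simp [frobSq]
    rw [hQ0F, Finset.sum_sub_distrib, ← Finset.mul_sum] at hsum
    rw [hFA, hS]
    linarith
  have : S ≤ frobSq A / (c * (ℓ : ℝ)) := by
    rw [le_div_iff₀ hcl]
    linarith [mul_comm S (c * (ℓ:ℝ))]
  linarith
end
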